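/- arXiv:1905.05459 — 2 statements merged into one kernel-verified Lean document; each statement's English description precedes it below -/
import Mathlib

section
/- Let α ∈ (1,2), c > 1, θ admissible, φ the measure on (−∞,0) with φ((−∞,−x)) = x^{−α}θ(log x), and ψ(z) = ∫_{(−∞,0)} (e^{izx} − 1 − izx) dφ(x) for Im z < 0. Then for every z in the open lower half-plane: if Re z > 0 then Im ψ(z) > 0, and if Re z < 0 then Im ψ(z) < 0. Consequently, ψ(z) is real if and only if z lies on the negative imaginary axis, i.e. z = −ik with k > 0. -/
/-!
For `Im z < 0` and `x < 0`, the point `w = i z x` has `Re w < 0`, and also `Im w < 0` when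
`Re z > 0`. Then `Im (e^w - 1 - w) = e^{Re w} sin (Im w) - Im w > 0`, since `sin s > s` for
`s < 0`, so integrating over a measure with positive mass gives `Im ψ(z) > 0`. Integrability
comes from `‖e^w - 1 - w‖ ≲ min (‖w‖², ‖w‖)` together with the tail bound
`φ((-∞, -x)) ≤ (sup θ) x^{-α}` (a continuous periodic `θ` is bounded), via the layer-cake
formula; `α < 2` controls small jumps and `α > 1` large ones. The case `Re z < 0` follows from
`ψ(-z̄) = conj ψ(z)`, which also makes `ψ(z)` real on the imaginary axis.
-/

open MeasureTheory Set Filter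

/-- The log-characteristic function of a negatively skewed semistable law with Levy
measure `φm` concentrated on the negative half-line:
`ψ(z) = ∫_{(-∞,0)} (e^{izx} - 1 - izx) dφ(x)`. -/
noncomputable def psiSemi (φm : MeasureTheory.Measure ℝ) (z : ℂ) : ℂ :=
  ∫ x in Set.Iio (0 : ℝ),
    (Complex.exp (Complex.I * z * (x : ℂ)) - 1 - Complex.I * z * (x : ℂ)) ∂φm

/-- Comparable to `min (s ^ 2) s` on `[0, ∞)`, but with an explicit derivative, which makes the
layer-cake formula exact. -/
noncomputable def levyWeight (s : ℝ) : ℝ := s ^ 2 / (1 + s)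

noncomputable def levyWeightDeriv (t : ℝ) : ℝ := 1 - ((1 + t) ^ 2)⁻¹

lemma levyWeight_nonneg {s : ℝ} (hs : 0 ≤ s) : 0 ≤ levyWeight s := by
  unfold levyWeight; positivity

lemma levyWeight_mul_le {k s : ℝ} (hk : 0 ≤ k) (hs : 0 ≤ s) :
    levyWeight (k * s) ≤ (k + k ^ 2) * levyWeight s := by
  unfold levyWeight
  rw [mul_div_assoc', div_le_div_iff₀ (by positivity) (by positivity)]
  have : 0 ≤ s ^ 2 * (k + k ^ 3 * s) := by positivity
  nlinarith

lemma norm_exp_sub_one_sub_le_levyWeight {w : ℂ} (hw : w.re ≤ 0) :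
    ‖Complex.exp w - 1 - w‖ ≤ 6 * levyWeight ‖w‖ := by
  have hw0 := norm_nonneg w
  unfold levyWeight
  rw [mul_div_assoc', le_div_iff₀ (by positivity)]
  rcases le_or_gt ‖w‖ 1 with h | h
  · have := Complex.norm_exp_sub_one_sub_id_le h
    nlinarith
  · have hexp : ‖Complex.exp w‖ ≤ 1 := by rwa [Complex.norm_exp, Real.exp_le_one_iff]
    have : ‖Complex.exp w - 1 - w‖ ≤ ‖Complex.exp w‖ + 1 + ‖w‖ := by
      refine (norm_sub_le _ _).trans ?_
      gcongr
      exact (norm_sub_le _ _).trans_eq (by rw [norm_one])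
    nlinarith

lemma im_exp_sub_one_sub_pos {w : ℂ} (hre : w.re < 0) (him : w.im < 0) :
    0 < (Complex.exp w - 1 - w).im := by
  have hsin : w.im < Real.sin w.im := by
    simpa using Real.sin_lt (neg_pos.2 him)
  have he0 := Real.exp_pos w.re
  have he1 : Real.exp w.re < 1 := Real.exp_lt_one_iff.2 hre
  simp only [Complex.sub_im, Complex.exp_im, Complex.one_im, sub_zero]
  rcases le_or_gt (Real.sin w.im) 0 with h | h <;> nlinarith

lemma hasDerivAt_levyWeight {s : ℝ} (hs : -1 < s) :
    HasDerivAt levyWeight (levyWeightDeriv s) s := by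
  have hs1 : 1 + s ≠ 0 := by linarith
  have h : levyWeight =ᶠ[nhds s] fun t => t - 1 + (1 + t)⁻¹ := by
    filter_upwards [lt_mem_nhds hs] with t ht
    have : 1 + t ≠ 0 := by linarith
    unfold levyWeight; field_simp; ring
  refine HasDerivAt.congr_of_eventuallyEq ?_ h
  convert ((hasDerivAt_id' s).sub_const 1).add (((hasDerivAt_id' s).const_add 1).inv hs1) using 1
  · rfl
  · unfold levyWeightDeriv; ring

lemma levyWeightDeriv_nonneg {t : ℝ} (ht : 0 ≤ t) : 0 ≤ levyWeightDeriv t := by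
  unfold levyWeightDeriv
  rw [sub_nonneg]
  exact inv_le_one_of_one_le₀ (by nlinarith)

lemma levyWeightDeriv_le_one (t : ℝ) : levyWeightDeriv t ≤ 1 := by
  unfold levyWeightDeriv; have := inv_nonneg.2 (sq_nonneg (1 + t)); linarith

lemma levyWeightDeriv_le_two_mul {t : ℝ} (ht : 0 ≤ t) : levyWeightDeriv t ≤ 2 * t := by
  unfold levyWeightDeriv
  rw [sub_le_comm, ← one_div, le_div_iff₀ (by positivity)]
  nlinarith [sq_nonneg t, pow_nonneg ht 3]

lemma intervalIntegrable_levyWeightDeriv {s : ℝ} (hs : 0 ≤ s) :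
    IntervalIntegrable levyWeightDeriv volume 0 s := by
  refine ContinuousOn.intervalIntegrable <|
    continuousOn_const.sub ((continuousOn_const.add continuousOn_id).pow 2 |>.inv₀ fun t ht => ?_)
  rw [uIcc_of_le hs] at ht
  have : 0 < 1 + t := by linarith [ht.1]
  exact (pow_pos this 2).ne'

lemma integral_levyWeightDeriv {s : ℝ} (hs : 0 ≤ s) :
    ∫ t in (0)..s, levyWeightDeriv t = levyWeight s := by
  rw [intervalIntegral.integral_eq_sub_of_hasDerivAt (fun t ht => hasDerivAt_levyWeight ?_)
    (intervalIntegrable_levyWeightDeriv hs)]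
  · simp [levyWeight]
  · rw [uIcc_of_le hs] at ht; linarith [ht.1]

lemma measurable_levyWeightDeriv : Measurable levyWeightDeriv := by
  unfold levyWeightDeriv; fun_prop

lemma integrableOn_rpow_neg_mul_levyWeightDeriv {α : ℝ} (hα1 : 1 < α) (hα2 : α < 2) :
    IntegrableOn (fun t => t ^ (-α) * levyWeightDeriv t) (Ioi 0) := by
  have hmeas : AEStronglyMeasurable (fun t : ℝ => t ^ (-α) * levyWeightDeriv t) :=
    (by have := measurable_levyWeightDeriv; fun_prop : Measurable _).aestronglyMeasurable
  rw [← Ioc_union_Ioi_eq_Ioi zero_le_one]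
  refine IntegrableOn.union ?_ ?_
  · have hdom : IntegrableOn (fun t : ℝ => 2 * t ^ (-α + 1)) (Ioc 0 1) :=
      ((intervalIntegral.intervalIntegrable_rpow' (r := -α + 1) (by linarith)).1).const_mul 2
    refine hdom.mono' hmeas.restrict ((ae_restrict_iff' measurableSet_Ioc).2 (ae_of_all _ ?_))
    intro t ht
    have hpow := Real.rpow_pos_of_pos ht.1 (-α)
    rw [Real.norm_of_nonneg (mul_nonneg hpow.le (levyWeightDeriv_nonneg ht.1.le)),
      Real.rpow_add_one ht.1.ne']
    nlinarith [levyWeightDeriv_le_two_mul ht.1.le]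
  · refine (integrableOn_Ioi_rpow_of_lt (a := -α) (by linarith) zero_lt_one).mono' hmeas.restrict
      ((ae_restrict_iff' measurableSet_Ioi).2 (ae_of_all _ fun t (ht : 1 < t) => ?_))
    have hpow := Real.rpow_pos_of_pos (zero_lt_one.trans ht) (-α)
    rw [Real.norm_of_nonneg (mul_nonneg hpow.le (levyWeightDeriv_nonneg (by linarith)))]
    nlinarith [levyWeightDeriv_le_one t]

lemma integrable_levyWeight_comp_of_meas_lt_le {Ω : Type*} [MeasurableSpace Ω] {μ : Measure Ω}
    {f : Ω → ℝ} {h : ℝ → ℝ} (hf : Measurable f) (hf0 : 0 ≤ᵐ[μ] f)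
    (hh : IntegrableOn (fun t => h t * levyWeightDeriv t) (Ioi 0))
    (htail : ∀ t > 0, μ {ω | t < f ω} ≤ ENNReal.ofReal (h t)) :
    Integrable (fun ω => levyWeight (f ω)) μ := by
  refine ⟨(by unfold levyWeight; fun_prop : Measurable _).aestronglyMeasurable, ?_⟩
  rw [hasFiniteIntegral_iff_ofReal (hf0.mono fun ω hω => levyWeight_nonneg hω)]
  calc ∫⁻ ω, ENNReal.ofReal (levyWeight (f ω)) ∂μ
      = ∫⁻ ω, ENNReal.ofReal (∫ t in (0)..f ω, levyWeightDeriv t) ∂μ := by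
        refine lintegral_congr_ae (hf0.mono fun ω hω => ?_)
        dsimp only
        rw [integral_levyWeightDeriv hω]
    _ = ∫⁻ t in Ioi 0, μ {ω | t < f ω} * ENNReal.ofReal (levyWeightDeriv t) :=
        lintegral_comp_eq_lintegral_meas_lt_mul μ hf0 hf.aemeasurable
          (fun t ht => intervalIntegrable_levyWeightDeriv (le_of_lt ht))
          ((ae_restrict_iff' measurableSet_Ioi).2
            (ae_of_all _ fun t ht => levyWeightDeriv_nonneg (le_of_lt ht)))
    _ ≤ ∫⁻ t in Ioi 0, ENNReal.ofReal (h t * levyWeightDeriv t) := by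
        refine setLIntegral_mono' measurableSet_Ioi fun t ht => ?_
        rw [ENNReal.ofReal_mul' (levyWeightDeriv_nonneg (le_of_lt ht))]
        gcongr
        exact htail t ht
    _ < ⊤ := hh.lintegral_lt_top

lemma integrableOn_levyWeight_neg_of_tail_le {φm : Measure ℝ} {α C : ℝ} (hα1 : 1 < α)
    (hα2 : α < 2) (htail : ∀ x > 0, φm (Iio (-x)) ≤ ENNReal.ofReal (C * x ^ (-α))) :
    IntegrableOn (fun x => levyWeight (-x)) (Iio 0) φm := by
  refine integrable_levyWeight_comp_of_meas_lt_le (h := fun t => C * t ^ (-α)) measurable_neg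
    ((ae_restrict_iff' measurableSet_Iio).2 (ae_of_all _ fun x (hx : x < 0) => by
      simp only [Pi.zero_apply]; linarith))
    (by simpa only [IntegrableOn, mul_assoc] using
      (integrableOn_rpow_neg_mul_levyWeightDeriv hα1 hα2).const_mul C)
    fun t ht => ?_
  have hset : {x : ℝ | t < -x} = Iio (-t) := by ext x; simp [lt_neg]
  rw [hset]
  exact (Measure.restrict_apply_le _ _).trans (htail t ht)

lemma integrableOn_psiSemi_integrand {φm : Measure ℝ}
    (hφ : IntegrableOn (fun x => levyWeight (-x)) (Iio 0) φm) {z : ℂ} (hz : z.im ≤ 0) :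
    IntegrableOn (fun x : ℝ => Complex.exp (Complex.I * z * x) - 1 - Complex.I * z * x)
      (Iio 0) φm := by
  refine (hφ.const_mul (6 * (‖z‖ + ‖z‖ ^ 2))).mono'
    (by fun_prop : Continuous _).aestronglyMeasurable
    ((ae_restrict_iff' measurableSet_Iio).2 (ae_of_all _ fun x (hx : x < 0) => ?_))
  have hre : (Complex.I * z * x).re ≤ 0 := by
    simp only [Complex.mul_re, Complex.I_re, Complex.I_im, Complex.ofReal_re, Complex.ofReal_im]
    nlinarith
  have hnorm : ‖Complex.I * z * x‖ = ‖z‖ * -x := by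
    rw [norm_mul, norm_mul, Complex.norm_I, Complex.norm_real, Real.norm_of_nonpos hx.le, one_mul]
  calc ‖Complex.exp (Complex.I * z * x) - 1 - Complex.I * z * x‖
      ≤ 6 * levyWeight (‖z‖ * -x) := hnorm ▸ norm_exp_sub_one_sub_le_levyWeight hre
    _ ≤ 6 * ((‖z‖ + ‖z‖ ^ 2) * levyWeight (-x)) := by
        gcongr; exact levyWeight_mul_le (norm_nonneg z) (by linarith)
    _ = 6 * (‖z‖ + ‖z‖ ^ 2) * levyWeight (-x) := by ring

lemma psiSemi_im_pos {φm : Measure ℝ} (hφ : IntegrableOn (fun x => levyWeight (-x)) (Iio 0) φm)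
    (hmass : φm (Iio 0) ≠ 0) {z : ℂ} (hre : 0 < z.re) (him : z.im < 0) :
    0 < (psiSemi φm z).im := by
  have hint := integrableOn_psiSemi_integrand hφ him.le
  have hre_eq : ∀ x : ℝ, (Complex.I * z * x).re = -(z.im * x) := fun x => by simp
  have him_eq : ∀ x : ℝ, (Complex.I * z * x).im = z.re * x := fun x => by simp
  have hpos : ∀ x : ℝ, x < 0 →
      0 < (Complex.exp (Complex.I * z * x) - 1 - Complex.I * z * x).im := fun x hx =>
    im_exp_sub_one_sub_pos (by simp only [hre_eq]; nlinarith) (by simp only [him_eq]; nlinarith)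
  rw [psiSemi, ← RCLike.im_to_complex, ← integral_im hint]
  simp only [RCLike.im_to_complex]
  rw [setIntegral_pos_iff_support_of_nonneg_ae
    ((ae_restrict_iff' measurableSet_Iio).2 (ae_of_all _ fun x hx => (hpos x hx).le)) hint.im]
  exact (pos_iff_ne_zero.2 hmass).trans_le (measure_mono fun x hx => ⟨(hpos x hx).ne', hx⟩)

lemma psiSemi_neg_conj (φm : Measure ℝ) (z : ℂ) :
    psiSemi φm (-(starRingEnd ℂ) z) = (starRingEnd ℂ) (psiSemi φm z) := by
  rw [psiSemi, psiSemi, ← integral_conj]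
  congr 1 with x
  have hw : Complex.I * -(starRingEnd ℂ) z * x = (starRingEnd ℂ) (Complex.I * z * x) := by
    simp only [map_mul, Complex.conj_I, Complex.conj_ofReal]; ring
  rw [hw, Complex.exp_conj, map_sub, map_sub, map_one]

lemma psiSemi_im_neg {φm : Measure ℝ} (hφ : IntegrableOn (fun x => levyWeight (-x)) (Iio 0) φm)
    (hmass : φm (Iio 0) ≠ 0) {z : ℂ} (hre : z.re < 0) (him : z.im < 0) :
    (psiSemi φm z).im < 0 := by
  simpa [psiSemi_neg_conj] using psiSemi_im_pos hφ hmass (z := -(starRingEnd ℂ) z)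
    (by simpa using hre) (by simpa using him)

lemma psiSemi_im_eq_zero_of_re_eq_zero (φm : Measure ℝ) {z : ℂ} (hre : z.re = 0) :
    (psiSemi φm z).im = 0 := by
  have hfix : -(starRingEnd ℂ) z = z := Complex.ext (by simp [hre]) (by simp)
  have := congrArg Complex.im (psiSemi_neg_conj φm z)
  rw [hfix, Complex.conj_im] at this
  linarith

theorem psiSemi_imaginary_part_sign_general
    (α c : ℝ) (hα : 1 < α ∧ α < 2) (hc : 1 < c)
    (θ : ℝ → ℝ) (hθc : Continuous θ) (hθpos : ∀ y : ℝ, 0 < θ y)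
    (hθper : Function.Periodic θ (Real.log (c ^ (1 / α))))
    (φm : MeasureTheory.Measure ℝ)
    (hφtail : ∀ x : ℝ, 0 < x → φm (Set.Iio (-x)) = ENNReal.ofReal (x ^ (-α) * θ (Real.log x))) :
    ∀ z : ℂ, z.im < 0 →
      (0 < z.re → 0 < (psiSemi φm z).im) ∧
      (z.re < 0 → (psiSemi φm z).im < 0) ∧
      ((psiSemi φm z).im = 0 ↔ ∃ k : ℝ, 0 < k ∧ z = -(Complex.I * (k : ℂ))) := by
  have hperiod : Real.log (c ^ (1 / α)) ≠ 0 := by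
    rw [Real.log_rpow (by linarith)]
    exact mul_ne_zero (one_div_ne_zero (by linarith)) (Real.log_pos hc).ne'
  obtain ⟨M, hM⟩ := (hθper.compact_of_continuous hperiod hθc).bddAbove
  have hφ : IntegrableOn (fun x => levyWeight (-x)) (Iio 0) φm :=
    integrableOn_levyWeight_neg_of_tail_le (C := M) hα.1 hα.2 fun x hx => by
      rw [hφtail x hx, mul_comm]
      gcongr
      exact hM (mem_range_self _)
  have hmass : φm (Iio 0) ≠ 0 := by
    refine ne_bot_of_le_ne_bot ?_ (measure_mono (Iio_subset_Iio (by norm_num : (-1 : ℝ) ≤ 0)))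
    simpa [hφtail 1 one_pos] using hθpos 0
  intro z hz
  refine ⟨fun hre => psiSemi_im_pos hφ hmass hre hz, fun hre => psiSemi_im_neg hφ hmass hre hz,
    fun h0 => ?_, ?_⟩
  · rcases lt_trichotomy z.re 0 with hre | hre | hre
    · exact absurd h0 (psiSemi_im_neg hφ hmass hre hz).ne
    · exact ⟨-z.im, by linarith, Complex.ext (by simp [hre]) (by simp)⟩
    · exact absurd h0 (psiSemi_im_pos hφ hmass hre hz).ne'
  · rintro ⟨k, -, rfl⟩
    exact psiSemi_im_eq_zero_of_re_eq_zero φm (by simp)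

/-- sign of the imaginary part of `ψ` on the open lower half-plane, and
`ψ(z)` is real iff `z` lies on the negative imaginary axis. -/
theorem psiSemi_imaginary_part_sign
    (α c : ℝ) (hα : 1 < α ∧ α < 2) (hc : 1 < c)
    (θ : ℝ → ℝ) (hθc : Continuous θ) (hθpos : ∀ y : ℝ, 0 < θ y)
    (hθper : Function.Periodic θ (Real.log (c ^ (1 / α))))
    (hθmono : AntitoneOn (fun x : ℝ => x ^ (-α) * θ (Real.log x)) (Set.Ioi 0))
    (φm : MeasureTheory.Measure ℝ)
    (hφtail : ∀ x : ℝ, 0 < x → φm (Set.Iio (-x)) = ENNReal.ofReal (x ^ (-α) * θ (Real.log x)))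
    (hφsupp : φm (Set.Ici 0) = 0) :
    ∀ z : ℂ, z.im < 0 →
      (0 < z.re → 0 < (psiSemi φm z).im) ∧
      (z.re < 0 → (psiSemi φm z).im < 0) ∧
      ((psiSemi φm z).im = 0 ↔ ∃ k : ℝ, 0 < k ∧ z = -(Complex.I * (k : ℂ))) :=
  psiSemi_imaginary_part_sign_general α c hα hc θ hθc hθpos hθper φm hφtail
end

section
/- Let α ∈ (1,2), c > 1, θ admissible, φ the measure on (−∞,0) with φ((−∞,−x)) = x^{−α}θ(log x), ψ(z) = ∫_{(−∞,0)} (e^{izx} − 1 − izx) dφ(x), and for s > 0 let ξ(s) > 0 be the unique positive real with ψ(−i·ξ(s)) = s. Then ξ: (0,∞) → (0,∞) is continuously differentiable and strictly increasing, satisfies ξ(c·s) = c^{1/α}·ξ(s) for all s > 0, and the function g(x) := e^{−x/α}·ξ(e^x) is log(c)-periodic, i.e. g(x + log c) = g(x) for all x ∈ ℝ; equivalently ξ(s) = s^{1/α}·g(log s). -/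
open MeasureTheory Set Filter

/-- The log-periodic factor `g(x) = e^{-x/α} ξ(e^x)`. -/
noncomputable def gFun (α : ℝ) (ξ : ℝ → ℝ) (x : ℝ) : ℝ :=
  Real.exp (-x / α) * ξ (Real.exp x)

/-!
Write `μ` for `φ` restricted to `(-∞, 0)` and `G(k) = ψ(-ik) = ∫ (e^{kx} - 1 - kx) dμ(x)`.
The tail condition together with the `log c^{1/α}`-periodicity of `θ` says exactly that the
dilation `x ↦ c^{1/α} x` pushes `μ` forward to `c • μ`; hence `G(c^{1/α} k) = c G(k)`, and the
integrand is integrable at `c^{1/α} k` iff it is at `k`. As `G(ξ 1) = 1`, it is integrable at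
`c^{n/α} ξ(1)` for all `n`, hence at every `k ≥ 0` because it increases with `k`. So `G` is
strictly increasing on `[0, ∞)`, and differentiation under the integral sign (dominated by
`x (e^{tx} - 1) ≤ (e^{2Tx} - 1 - 2Tx) / T` for `0 ≤ t ≤ T`, `x ≤ 0`) makes it `C¹` with positive
derivative on `(0, ∞)`. Its right inverse `ξ` is therefore strictly increasing, continuous and
`C¹`, and injectivity of `G` turns `G(c^{1/α} ξ(s)) = c s = G(ξ(c s))` into the scaling relation,
of which the periodicity of `g` is a rewriting.
-/

open Real

noncomputable def expKernel (k x : ℝ) : ℝ := exp (k * x) - 1 - k * x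

lemma expKernel_nonneg (k x : ℝ) : 0 ≤ expKernel k x := by
  have := add_one_le_exp (k * x)
  unfold expKernel
  linarith

lemma continuous_expKernel (k : ℝ) : Continuous (expKernel k) := by
  unfold expKernel
  fun_prop

lemma expKernel_mul_left (r k x : ℝ) : expKernel (r * k) x = expKernel k (r * x) := by
  simp only [expKernel, mul_assoc, mul_left_comm]

lemma strictAntiOn_exp_sub_one_sub : StrictAntiOn (fun u ↦ exp u - 1 - u) (Iic 0) := by
  refine strictAntiOn_of_deriv_neg (convex_Iic 0) (by fun_prop) fun u hu ↦ ?_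
  rw [interior_Iic, mem_Iio] at hu
  rw [(((hasDerivAt_exp u).sub_const 1).fun_sub (hasDerivAt_id' u)).deriv, sub_neg]
  exact exp_lt_one_iff.2 hu

lemma expKernel_le_expKernel {k₁ k₂ x : ℝ} (hx : x ≤ 0) (hk₁ : 0 ≤ k₁) (h : k₁ ≤ k₂) :
    expKernel k₁ x ≤ expKernel k₂ x :=
  strictAntiOn_exp_sub_one_sub.antitoneOn (mul_nonpos_of_nonneg_of_nonpos (hk₁.trans h) hx)
    (mul_nonpos_of_nonneg_of_nonpos hk₁ hx) (mul_le_mul_of_nonpos_right h hx)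

lemma expKernel_lt_expKernel {k₁ k₂ x : ℝ} (hx : x < 0) (hk₁ : 0 ≤ k₁) (h : k₁ < k₂) :
    expKernel k₁ x < expKernel k₂ x :=
  strictAntiOn_exp_sub_one_sub (mul_nonpos_of_nonneg_of_nonpos (hk₁.trans h.le) hx.le)
    (mul_nonpos_of_nonneg_of_nonpos hk₁ hx.le) (mul_lt_mul_of_neg_right h hx)

lemma hasDerivAt_expKernel (k x : ℝ) :
    HasDerivAt (fun k ↦ expKernel k x) (x * (exp (k * x) - 1)) k :=
  ((((hasDerivAt_mul_const x).exp).sub_const 1).fun_sub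
    (hasDerivAt_mul_const (x := k) x)).congr_deriv (by ring)

lemma norm_deriv_expKernel_le {k t x : ℝ} (ht : t ∈ Metric.ball k k) (hx : x ≤ 0) :
    ‖x * (exp (t * x) - 1)‖ ≤ (2 * k)⁻¹ * expKernel (4 * k) x := by
  rw [Metric.mem_ball, dist_eq, abs_lt] at ht
  have hk : 0 < 2 * k := by linarith
  have hexp : exp (2 * k * x) ≤ exp (t * x) := exp_le_exp.2 (by nlinarith)
  have hle_one : exp (t * x) ≤ 1 := exp_le_one_iff.2 (by nlinarith)
  -- with `u = 2kx ≤ 0`: `expKernel 2 u - u (e^u - 1) = (e^u + 1)(e^u - 1 - u) ≥ 0`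
  have hconv : 2 * k * x * (exp (2 * k * x) - 1) ≤ expKernel (4 * k) x := by
    have hsq : exp (4 * k * x) = exp (2 * k * x) ^ 2 := by rw [← exp_nat_mul]; ring_nf
    have := mul_nonneg (add_pos (exp_pos (2 * k * x)) one_pos).le
      (sub_nonneg.2 (add_one_le_exp (2 * k * x)))
    rw [expKernel, hsq]
    nlinarith
  rw [norm_of_nonneg (mul_nonneg_of_nonpos_of_nonpos hx (by linarith)), le_inv_mul_iff₀ hk]
  calc 2 * k * (x * (exp (t * x) - 1)) ≤ 2 * k * (x * (exp (2 * k * x) - 1)) :=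
        mul_le_mul_of_nonneg_left (mul_le_mul_of_nonpos_left (by linarith) hx) hk.le
    _ ≤ expKernel (4 * k) x := by linarith

lemma integral_pos_of_ae_pos {X : Type*} [MeasurableSpace X] {μ : Measure X} {f : X → ℝ}
    (hμ : μ ≠ 0) (hf : Integrable f μ) (hpos : ∀ᵐ x ∂μ, 0 < f x) : 0 < ∫ x, f x ∂μ := by
  rw [integral_pos_iff_support_of_nonneg_ae (hpos.mono fun _ hx ↦ hx.le) hf]
  have hnull : μ (Function.support f)ᶜ = 0 :=
    measure_mono_null (fun x hx ↦ by simpa [Function.mem_support] using hx)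
      (ae_iff.1 (hpos.mono fun _ hx ↦ hx.ne'))
  calc 0 < μ univ := Measure.measure_univ_pos.2 hμ
    _ ≤ μ (Function.support f) + μ (Function.support f)ᶜ := by
      rw [← union_compl_self (Function.support f)]; exact measure_union_le _ _
    _ = μ (Function.support f) := by rw [hnull, add_zero]

noncomputable def laplaceExponent (μ : Measure ℝ) (k : ℝ) : ℝ := ∫ x, expKernel k x ∂μ

noncomputable def laplaceExponentDeriv (μ : Measure ℝ) (k : ℝ) : ℝ :=
  ∫ x, x * (exp (k * x) - 1) ∂μ

section LaplaceExponent

variable {μ : Measure ℝ}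

lemma integrable_expKernel_of_le (hμ : ∀ᵐ x ∂μ, x ≤ 0) {k K : ℝ} (hk : 0 ≤ k) (hkK : k ≤ K)
    (hK : Integrable (expKernel K) μ) : Integrable (expKernel k) μ :=
  hK.mono (continuous_expKernel k).aestronglyMeasurable <| by
    filter_upwards [hμ] with x hx
    rw [norm_of_nonneg (expKernel_nonneg k x), norm_of_nonneg (expKernel_nonneg K x)]
    exact expKernel_le_expKernel hx hk hkK

lemma integrable_expKernel_of_laplaceExponent_ne_zero {k : ℝ} (h : laplaceExponent μ k ≠ 0) :
    Integrable (expKernel k) μ := by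
  by_contra hni
  exact h (integral_undef hni)

lemma laplaceExponent_strictMonoOn (hμ : ∀ᵐ x ∂μ, x < 0) (hμ0 : μ ≠ 0)
    (hint : ∀ k, 0 ≤ k → Integrable (expKernel k) μ) :
    StrictMonoOn (laplaceExponent μ) (Ici 0) := by
  intro k₁ hk₁ k₂ hk₂ h
  have hdiff := integral_pos_of_ae_pos (f := fun x ↦ expKernel k₂ x - expKernel k₁ x) hμ0
    ((hint k₂ hk₂).sub (hint k₁ hk₁)) <| by
    filter_upwards [hμ] with x hx using sub_pos.2 (expKernel_lt_expKernel hx hk₁ h)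
  rwa [integral_sub (hint k₂ hk₂) (hint k₁ hk₁), sub_pos] at hdiff

lemma integrable_deriv_expKernel (hμ : ∀ᵐ x ∂μ, x ≤ 0)
    (hint : ∀ k, 0 ≤ k → Integrable (expKernel k) μ) {k : ℝ} (hk : 0 < k) :
    Integrable (fun x ↦ x * (exp (k * x) - 1)) μ :=
  ((hint (4 * k) (by positivity)).const_mul (2 * k)⁻¹).mono' (by fun_prop) <| by
    filter_upwards [hμ] with x hx using norm_deriv_expKernel_le (Metric.mem_ball_self hk) hx

lemma hasDerivAt_laplaceExponent (hμ : ∀ᵐ x ∂μ, x ≤ 0)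
    (hint : ∀ k, 0 ≤ k → Integrable (expKernel k) μ) {k : ℝ} (hk : 0 < k) :
    HasDerivAt (laplaceExponent μ) (laplaceExponentDeriv μ k) k :=
  (hasDerivAt_integral_of_dominated_loc_of_deriv_le (Metric.ball_mem_nhds k hk)
    (Eventually.of_forall fun t ↦ (continuous_expKernel t).aestronglyMeasurable)
    (hint k hk.le) (by fun_prop)
    (by filter_upwards [hμ] with x hx t ht using norm_deriv_expKernel_le ht hx)
    ((hint (4 * k) (by positivity)).const_mul (2 * k)⁻¹)
    (Eventually.of_forall fun x t _ ↦ hasDerivAt_expKernel t x)).2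

lemma continuousOn_laplaceExponentDeriv (hμ : ∀ᵐ x ∂μ, x ≤ 0)
    (hint : ∀ k, 0 ≤ k → Integrable (expKernel k) μ) :
    ContinuousOn (laplaceExponentDeriv μ) (Ioi 0) := fun k (hk : 0 < k) ↦
  (continuousAt_of_dominated (Eventually.of_forall fun t ↦ by fun_prop)
    (by filter_upwards [Metric.ball_mem_nhds k hk] with t ht
        filter_upwards [hμ] with x hx using norm_deriv_expKernel_le ht hx)
    ((hint (4 * k) (by positivity)).const_mul (2 * k)⁻¹)
    (Eventually.of_forall fun x ↦ by fun_prop)).continuousWithinAt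

lemma laplaceExponentDeriv_pos (hμ : ∀ᵐ x ∂μ, x < 0) (hμ0 : μ ≠ 0)
    (hint : ∀ k, 0 ≤ k → Integrable (expKernel k) μ) {k : ℝ} (hk : 0 < k) :
    0 < laplaceExponentDeriv μ k :=
  integral_pos_of_ae_pos hμ0 (integrable_deriv_expKernel (hμ.mono fun _ hx ↦ hx.le) hint hk) <| by
    filter_upwards [hμ] with x hx using
      mul_pos_of_neg_of_neg hx (sub_neg.2 (exp_lt_one_iff.2 (mul_neg_of_pos_of_neg hk hx)))

end LaplaceExponent

lemma StrictMonoOn.of_leftInvOn {α β : Type*} [Preorder α] [LinearOrder β] {G : β → α}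
    {ξ : α → β} {s : Set α} {t : Set β} (hG : StrictMonoOn G t) (hmaps : MapsTo ξ s t)
    (hinv : LeftInvOn G ξ s) : StrictMonoOn ξ s := fun a ha b hb hab ↦
  (hG.lt_iff_lt (hmaps ha) (hmaps hb)).1 (by rwa [hinv ha, hinv hb])

lemma contDiffOn_one_of_leftInvOn {G G' ξ : ℝ → ℝ} {s t : Set ℝ} (hs : IsOpen s)
    (hξ : ContinuousOn ξ s) (hmaps : MapsTo ξ s t) (hG : ∀ k ∈ t, HasDerivAt G (G' k) k)
    (hG' : ContinuousOn G' t) (hG'0 : ∀ k ∈ t, G' k ≠ 0) (hinv : LeftInvOn G ξ s) :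
    ContDiffOn ℝ 1 ξ s := by
  have hder : ∀ y ∈ s, HasDerivAt ξ (G' (ξ y))⁻¹ y := fun y hy ↦
    (hG _ (hmaps hy)).of_local_left_inverse ((hξ y hy).continuousAt (hs.mem_nhds hy))
      (hG'0 _ (hmaps hy)) (eventually_of_mem (hs.mem_nhds hy) hinv)
  rw [show (1 : WithTop ℕ∞) = 0 + 1 from rfl, contDiffOn_succ_iff_deriv_of_isOpen hs]
  refine ⟨fun y hy ↦ (hder y hy).differentiableAt.differentiableWithinAt, by simp, ?_⟩
  rw [contDiffOn_zero]
  exact ((hG'.comp hξ hmaps).inv₀ fun y hy ↦ hG'0 _ (hmaps hy)).congr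
    fun y hy ↦ (hder y hy).deriv

section RightInverse

variable {μ : Measure ℝ} {ξ : ℝ → ℝ}

lemma laplaceExponent_surjOn_of_leftInvOn (hμ : ∀ᵐ x ∂μ, x < 0) (hμ0 : μ ≠ 0)
    (hint : ∀ k, 0 ≤ k → Integrable (expKernel k) μ) (hmaps : MapsTo ξ (Ioi 0) (Ioi 0))
    (hinv : LeftInvOn (laplaceExponent μ) ξ (Ioi 0)) : SurjOn ξ (Ioi 0) (Ioi 0) := by
  intro k (hk : 0 < k)
  have hmono := laplaceExponent_strictMonoOn hμ hμ0 hint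
  have hpos : 0 < laplaceExponent μ k := by
    simpa [laplaceExponent, expKernel] using hmono self_mem_Ici hk.le hk
  exact ⟨_, hpos, hmono.injOn (mem_Ici.2 (hmaps hpos).le) hk.le (hinv hpos)⟩

lemma strictMonoOn_of_leftInvOn_laplaceExponent (hμ : ∀ᵐ x ∂μ, x < 0) (hμ0 : μ ≠ 0)
    (hint : ∀ k, 0 ≤ k → Integrable (expKernel k) μ) (hmaps : MapsTo ξ (Ioi 0) (Ioi 0))
    (hinv : LeftInvOn (laplaceExponent μ) ξ (Ioi 0)) : StrictMonoOn ξ (Ioi 0) :=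
  (laplaceExponent_strictMonoOn hμ hμ0 hint).of_leftInvOn (hmaps.mono_right Ioi_subset_Ici_self)
    hinv

lemma contDiffOn_of_leftInvOn_laplaceExponent (hμ : ∀ᵐ x ∂μ, x < 0) (hμ0 : μ ≠ 0)
    (hint : ∀ k, 0 ≤ k → Integrable (expKernel k) μ) (hmaps : MapsTo ξ (Ioi 0) (Ioi 0))
    (hinv : LeftInvOn (laplaceExponent μ) ξ (Ioi 0)) : ContDiffOn ℝ 1 ξ (Ioi 0) := by
  have hμ' : ∀ᵐ x ∂μ, x ≤ 0 := hμ.mono fun _ hx ↦ hx.le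
  have hmono := strictMonoOn_of_leftInvOn_laplaceExponent hμ hμ0 hint hmaps hinv
  have hcont : ContinuousOn ξ (Ioi 0) := fun s (hs : 0 < s) ↦
    (hmono.continuousAt_of_image_mem_nhds (Ioi_mem_nhds hs) (mem_of_superset
      (Ioi_mem_nhds (hmaps hs)) (laplaceExponent_surjOn_of_leftInvOn hμ hμ0 hint hmaps hinv)))
      |>.continuousWithinAt
  exact contDiffOn_one_of_leftInvOn isOpen_Ioi hcont hmaps
    (fun k hk ↦ hasDerivAt_laplaceExponent hμ' hint hk) (continuousOn_laplaceExponentDeriv hμ' hint)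
    (fun k hk ↦ (laplaceExponentDeriv_pos hμ hμ0 hint hk).ne') hinv

end RightInverse

section Scaling

variable {μ : Measure ℝ} {r c : ℝ}

lemma laplaceExponent_mul_of_map_eq (hc : 0 ≤ c) (hmap : μ.map (r * ·) = ENNReal.ofReal c • μ)
    (k : ℝ) : laplaceExponent μ (r * k) = c * laplaceExponent μ k := by
  have h := integral_map (μ := μ) (measurable_const_mul r).aemeasurable
    (continuous_expKernel k).aestronglyMeasurable
  rw [hmap, integral_smul_measure, ENNReal.toReal_ofReal hc, smul_eq_mul] at h
  simp only [laplaceExponent, expKernel_mul_left, h]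

lemma integrable_expKernel_mul_iff (hr : r ≠ 0) (hc : 0 < c)
    (hmap : μ.map (r * ·) = ENNReal.ofReal c • μ) (k : ℝ) :
    Integrable (expKernel (r * k)) μ ↔ Integrable (expKernel k) μ := by
  have h := (Homeomorph.mulLeft₀ r hr).measurableEmbedding.integrable_map_iff
    (g := expKernel k) (μ := μ)
  rw [Homeomorph.coe_mulLeft₀, hmap,
    integrable_smul_measure (ENNReal.ofReal_pos.2 hc).ne' ENNReal.ofReal_ne_top] at h
  rw [h]
  exact iff_of_eq (congrArg (Integrable · μ) (funext fun x ↦ expKernel_mul_left r k x))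

lemma integrable_expKernel_of_map_eq (hμ : ∀ᵐ x ∂μ, x ≤ 0) (hr : 1 < r) (hc : 0 < c)
    (hmap : μ.map (r * ·) = ENNReal.ofReal c • μ) {k₀ : ℝ} (hk₀ : 0 < k₀)
    (h₀ : Integrable (expKernel k₀) μ) {k : ℝ} (hk : 0 ≤ k) : Integrable (expKernel k) μ := by
  have hpow : ∀ n : ℕ, Integrable (expKernel (r ^ n * k₀)) μ := by
    intro n
    induction n with
    | zero => simpa using h₀
    | succ n ih =>
      rwa [pow_succ', mul_assoc, integrable_expKernel_mul_iff (by linarith) hc hmap]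
  obtain ⟨n, hn⟩ := pow_unbounded_of_one_lt (k / k₀) hr
  exact integrable_expKernel_of_le hμ hk ((div_lt_iff₀ hk₀).1 hn).le (hpow n)

end Scaling

theorem MeasureTheory.Measure.ext_of_Iio_of_ae_neg {ν₁ ν₂ : Measure ℝ} (h₁ : ∀ᵐ x ∂ν₁, x < 0)
    (h₂ : ∀ᵐ x ∂ν₂, x < 0) (hfin : ∀ t < 0, ν₁ (Iio t) ≠ ⊤)
    (h : ∀ t < 0, ν₁ (Iio t) = ν₂ (Iio t)) : ν₁ = ν₂ := by
  have hrestrict : ∀ t < 0, ν₁.restrict (Iio t) = ν₂.restrict (Iio t) := by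
    intro t ht
    have : IsFiniteMeasure (ν₁.restrict (Iio t)) := isFiniteMeasure_restrict.2 (hfin t ht)
    have hIio : ∀ a, ν₁.restrict (Iio t) (Iio a) = ν₂.restrict (Iio t) (Iio a) := fun a ↦ by
      rw [restrict_apply measurableSet_Iio, restrict_apply measurableSet_Iio, Iio_inter_Iio]
      exact h _ (min_lt_of_right_lt ht)
    refine ext_of_Ici _ _ fun a ↦ ?_
    rw [← compl_Iio, measure_compl measurableSet_Iio (measure_ne_top _ _),
      measure_compl measurableSet_Iio (hIio a ▸ measure_ne_top _ _), restrict_apply_univ,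
      restrict_apply_univ, h t ht, hIio a]
  have hunion : ⋃ n : ℕ, Iio (-((n : ℝ) + 1)⁻¹) = Iio 0 := by
    ext x
    simp only [mem_iUnion, mem_Iio]
    refine ⟨fun ⟨n, hn⟩ ↦ hn.trans (neg_neg_of_pos (by positivity)), fun hx ↦ ?_⟩
    obtain ⟨n, hn⟩ := exists_nat_one_div_lt (neg_pos.2 hx)
    exact ⟨n, by rw [one_div] at hn; linarith⟩
  calc ν₁ = ν₁.restrict (Iio 0) := (restrict_eq_self_of_ae_mem h₁).symm
    _ = ν₂.restrict (Iio 0) := by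
      rw [← hunion, restrict_iUnion_congr]
      exact fun n ↦ hrestrict _ (neg_neg_of_pos (by positivity))
    _ = ν₂ := restrict_eq_self_of_ae_mem h₂

section SemistableTail

variable {α c : ℝ} {θ : ℝ → ℝ} {φm : Measure ℝ}

lemma restrict_Iio_zero_apply_Iio
    (hφtail : ∀ x : ℝ, 0 < x → φm (Iio (-x)) = ENNReal.ofReal (x ^ (-α) * θ (log x)))
    {t : ℝ} (ht : t < 0) :
    φm.restrict (Iio 0) (Iio t) = ENNReal.ofReal ((-t) ^ (-α) * θ (log (-t))) := by
  rw [Measure.restrict_apply measurableSet_Iio, inter_eq_left.2 (Iio_subset_Iio ht.le),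
    ← hφtail _ (neg_pos.2 ht), neg_neg]

lemma restrict_Iio_zero_ne_zero (hθ : 0 < θ 0)
    (hφtail : ∀ x : ℝ, 0 < x → φm (Iio (-x)) = ENNReal.ofReal (x ^ (-α) * θ (log x))) :
    φm.restrict (Iio 0) ≠ 0 := by
  have h1 := restrict_Iio_zero_apply_Iio hφtail (neg_one_lt_zero (R := ℝ))
  rw [neg_neg, one_rpow, log_one, one_mul] at h1
  intro h
  rw [h, Measure.coe_zero, Pi.zero_apply, eq_comm, ENNReal.ofReal_eq_zero] at h1
  exact hθ.not_ge h1

lemma map_mul_restrict_Iio_zero (hα : α ≠ 0) (hc : 0 < c)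
    (hθper : Function.Periodic θ (log (c ^ (1 / α))))
    (hφtail : ∀ x : ℝ, 0 < x → φm (Iio (-x)) = ENNReal.ofReal (x ^ (-α) * θ (log x))) :
    (φm.restrict (Iio 0)).map (c ^ (1 / α) * ·) = ENNReal.ofReal c • φm.restrict (Iio 0) := by
  have hrα : (c ^ (1 / α)) ^ (-α) = c⁻¹ := by
    rw [← rpow_mul hc.le, show 1 / α * -α = -1 by field_simp, rpow_neg_one]
  set r := c ^ (1 / α)
  have hr : 0 < r := rpow_pos_of_pos hc _
  have htail_div : ∀ x > 0, (x / r) ^ (-α) * θ (log (x / r)) = c * (x ^ (-α) * θ (log x)) := by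
    intro x hx
    rw [div_rpow hx.le hr.le, hrα, log_div hx.ne' hr.ne', hθper.sub_eq, div_inv_eq_mul]
    ring
  have hmap_Iio : ∀ t < 0, (φm.restrict (Iio 0)).map (r * ·) (Iio t)
      = ENNReal.ofReal (c * ((-t) ^ (-α) * θ (log (-t)))) := fun t ht ↦ by
    have hpre : (r * ·) ⁻¹' Iio t = Iio (t / r) := by
      ext x
      simp [lt_div_iff₀ hr, mul_comm]
    rw [Measure.map_apply (measurable_const_mul r) measurableSet_Iio, hpre,
      restrict_Iio_zero_apply_Iio hφtail (div_neg_of_neg_of_pos ht hr), ← neg_div,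
      htail_div _ (neg_pos.2 ht)]
  refine Measure.ext_of_Iio_of_ae_neg ?_ ?_ (fun t ht ↦ by simp [hmap_Iio t ht]) fun t ht ↦ ?_
  · rw [ae_map_iff (measurable_const_mul r).aemeasurable measurableSet_Iio]
    filter_upwards [ae_restrict_mem measurableSet_Iio] with x hx using mul_neg_of_pos_of_neg hr hx
  · exact Measure.ae_smul_measure (ae_restrict_mem measurableSet_Iio) _
  · rw [hmap_Iio t ht, Measure.smul_apply, restrict_Iio_zero_apply_Iio hφtail ht, smul_eq_mul,
      ENNReal.ofReal_mul hc.le]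

end SemistableTail

lemma psiSemi_neg_I_mul (φm : Measure ℝ) (k : ℝ) :
    psiSemi φm (-(Complex.I * k)) = laplaceExponent (φm.restrict (Iio 0)) k := by
  rw [psiSemi, laplaceExponent, ← integral_complex_ofReal]
  congr 1
  funext x
  have hI : Complex.I * -(Complex.I * k) * x = ((k * x : ℝ) : ℂ) := by
    push_cast
    linear_combination (-(k : ℂ) * x) * Complex.I_sq
  rw [hI, expKernel]
  push_cast
  ring

lemma gFun_periodic {α c : ℝ} {ξ : ℝ → ℝ} (hc : 0 < c)
    (hξ : ∀ s, 0 < s → ξ (c * s) = c ^ (1 / α) * ξ s) :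
    Function.Periodic (gFun α ξ) (log c) := by
  intro x
  have hc' : exp (-log c / α) * c ^ (1 / α) = 1 := by
    rw [rpow_def_of_pos hc, ← exp_add, show -log c / α + log c * (1 / α) = 0 by ring, exp_zero]
  rw [gFun, gFun, exp_add, exp_log hc, mul_comm _ c, hξ _ (exp_pos x),
    show -(x + log c) / α = -x / α + -log c / α by ring, exp_add]
  linear_combination exp (-x / α) * ξ (exp x) * hc'

lemma eq_rpow_mul_gFun_log (α : ℝ) (ξ : ℝ → ℝ) {s : ℝ} (hs : 0 < s) :
    ξ s = s ^ (1 / α) * gFun α ξ (log s) := by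
  rw [gFun, exp_log hs, rpow_def_of_pos hs, ← mul_assoc, ← exp_add,
    show log s * (1 / α) + -log s / α = 0 by ring, exp_zero, one_mul]

theorem xi_scaling_and_periodicity_general
    (α c : ℝ) (hα : 1 < α ∧ α < 2) (hc : 1 < c)
    (θ : ℝ → ℝ) (hθpos : ∀ y : ℝ, 0 < θ y)
    (hθper : Function.Periodic θ (Real.log (c ^ (1 / α))))
    (φm : MeasureTheory.Measure ℝ)
    (hφtail : ∀ x : ℝ, 0 < x → φm (Set.Iio (-x)) = ENNReal.ofReal (x ^ (-α) * θ (Real.log x)))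
    (ξ : ℝ → ℝ)
    (hξ : ∀ s : ℝ, 0 < s → 0 < ξ s ∧ psiSemi φm (-(Complex.I * (ξ s : ℂ))) = (s : ℂ)) :
    ContDiffOn ℝ 1 ξ (Set.Ioi 0) ∧
    StrictMonoOn ξ (Set.Ioi 0) ∧
    (∀ s : ℝ, 0 < s → ξ (c * s) = c ^ (1 / α) * ξ s) ∧
    Function.Periodic (gFun α ξ) (Real.log c) ∧
    (∀ s : ℝ, 0 < s → ξ s = s ^ (1 / α) * gFun α ξ (Real.log s)) := by
  set μ := φm.restrict (Iio 0)
  have hc0 : 0 < c := by linarith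
  have hμ : ∀ᵐ x ∂μ, x < 0 := ae_restrict_mem measurableSet_Iio
  have hμ0 : μ ≠ 0 := restrict_Iio_zero_ne_zero (hθpos 0) hφtail
  have hmaps : MapsTo ξ (Ioi 0) (Ioi 0) := fun s hs ↦ (hξ s hs).1
  have hinv : LeftInvOn (laplaceExponent μ) ξ (Ioi 0) := fun s hs ↦ by
    exact_mod_cast (psiSemi_neg_I_mul φm (ξ s)).symm.trans (hξ s hs).2
  have hmap := map_mul_restrict_Iio_zero (by linarith) hc0 hθper hφtail
  have hint₁ : Integrable (expKernel (ξ 1)) μ :=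
    integrable_expKernel_of_laplaceExponent_ne_zero (by rw [hinv (mem_Ioi.2 one_pos)]; simp)
  have hint : ∀ k, 0 ≤ k → Integrable (expKernel k) μ := fun k ↦
    integrable_expKernel_of_map_eq (hμ.mono fun _ hx ↦ hx.le)
      (one_lt_rpow hc (one_div_pos.2 (by linarith))) hc0 hmap (hmaps (mem_Ioi.2 one_pos)) hint₁
  have hscale : ∀ s, 0 < s → ξ (c * s) = c ^ (1 / α) * ξ s := fun s hs ↦
    (laplaceExponent_strictMonoOn hμ hμ0 hint).injOn (mem_Ici.2 (hmaps (mul_pos hc0 hs)).le)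
      (mem_Ici.2 (mul_pos (rpow_pos_of_pos hc0 _) (hmaps hs)).le) <| by
        rw [hinv (mul_pos hc0 hs), laplaceExponent_mul_of_map_eq hc0.le hmap, hinv hs]
  exact ⟨contDiffOn_of_leftInvOn_laplaceExponent hμ hμ0 hint hmaps hinv,
    strictMonoOn_of_leftInvOn_laplaceExponent hμ hμ0 hint hmaps hinv, hscale,
    gFun_periodic hc0 hscale, fun s hs ↦ eq_rpow_mul_gFun_log α ξ hs⟩

/-- Lemma 4.2: the inverse `ξ` of `k ↦ ψ(-ik)` is continuously
differentiable and strictly increasing on `(0,∞)`, satisfies the scaling relation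
`ξ(cs) = c^{1/α} ξ(s)`, the function `g(x) = e^{-x/α} ξ(e^x)` is `log c`-periodic,
and `ξ(s) = s^{1/α} g(log s)`. -/
theorem xi_scaling_and_periodicity
    (α c : ℝ) (hα : 1 < α ∧ α < 2) (hc : 1 < c)
    (θ : ℝ → ℝ) (hθc : Continuous θ) (hθpos : ∀ y : ℝ, 0 < θ y)
    (hθper : Function.Periodic θ (Real.log (c ^ (1 / α))))
    (hθmono : AntitoneOn (fun x : ℝ => x ^ (-α) * θ (Real.log x)) (Set.Ioi 0))
    (φm : MeasureTheory.Measure ℝ)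
    (hφtail : ∀ x : ℝ, 0 < x → φm (Set.Iio (-x)) = ENNReal.ofReal (x ^ (-α) * θ (Real.log x)))
    (hφsupp : φm (Set.Ici 0) = 0)
    (ξ : ℝ → ℝ)
    (hξ : ∀ s : ℝ, 0 < s → 0 < ξ s ∧ psiSemi φm (-(Complex.I * (ξ s : ℂ))) = (s : ℂ)) :
    ContDiffOn ℝ 1 ξ (Set.Ioi 0) ∧
    StrictMonoOn ξ (Set.Ioi 0) ∧
    (∀ s : ℝ, 0 < s → ξ (c * s) = c ^ (1 / α) * ξ s) ∧
    Function.Periodic (gFun α ξ) (Real.log c) ∧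
    (∀ s : ℝ, 0 < s → ξ s = s ^ (1 / α) * gFun α ξ (Real.log s)) :=
  xi_scaling_and_periodicity_general α c hα hc θ hθpos hθper φm hφtail ξ hξ
end
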